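/- Let 𝒪 be an order ideal in P = K[x_0,…,x_n], fix a labeling of ∂𝒪 ordered increasingly by degree, and let G be a homogeneous ∂𝒪-prebasis. If f ∈ ⟨𝒯G⟩ is nonzero, then there exist finitely many border terms σ_{i_1},…,σ_{i_r} ∈ ∂𝒪 with deg(σ_{i_j}) ≤ deg(f) and polynomials q_1,…,q_r ∈ P such that f = q_1·g_{σ_{i_1}} + ⋯ + q_r·g_{σ_{i_r}} and deg(q_j) ≤ ind_𝒪(f) − 1 whenever q_j ≠ 0. -/

import Mathlib

open MvPolynomial

namespace Border

/-- A term of `K[x_0, …, x_n]`, identified with its exponent vector. -/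
abbrev Term (n : ℕ) := Fin (n + 1) →₀ ℕ

variable {n : ℕ}

/-- The (standard) degree of a term. -/
def tdeg (m : Term n) : ℕ := ∑ i, m i

/-- An order ideal: a nonempty set of terms closed under divisors. -/
def IsOrderIdeal (O : Set (Term n)) : Prop :=
  O.Nonempty ∧ ∀ τ ∈ O, ∀ τ' : Term n, τ' ≤ τ → τ' ∈ O

/-- The border `∂𝒪 = (x_0·𝒪 ∪ ⋯ ∪ x_n·𝒪) ∖ 𝒪`. -/
def border (O : Set (Term n)) : Set (Term n) :=
  {σ | σ ∉ O ∧ ∃ r : Fin (n + 1), ∃ τ ∈ O, σ = τ + Finsupp.single r 1}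

/-- Multiplicative set of a border term `σ`, with respect to a labeling `lab` of the border:
`𝒯_σ = {η : σ' ∤ η·σ for every border term σ' with a larger label}`. -/
def mulSet (O : Set (Term n)) (lab : Term n → ℕ) (σ : Term n) : Set (Term n) :=
  {η | ∀ σ' ∈ border O, lab σ < lab σ' → ¬ σ' ≤ η + σ}

/-- The cone `C(σ) = {η·σ : η ∈ 𝒯_σ}`. -/
def cone (O : Set (Term n)) (lab : Term n → ℕ) (σ : Term n) : Set (Term n) :=
  (fun η => η + σ) '' mulSet O lab σ

/-- A labeling of the border which is injective and ordered increasingly by degree. -/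
def DegOrderedLabeling (O : Set (Term n)) (lab : Term n → ℕ) : Prop :=
  Set.InjOn lab (border O) ∧
    ∀ σ ∈ border O, ∀ σ' ∈ border O, lab σ < lab σ' → tdeg σ ≤ tdeg σ'

/-- Iterated border closures: `∂⁰𝒪 := 𝒪`, and the `(k+1)`-st closure adds the border. -/
def borderClosure (O : Set (Term n)) : ℕ → Set (Term n)
  | 0 => O
  | k + 1 => borderClosure O k ∪ border (borderClosure O k)

/-- The index `ind_𝒪(τ)`: the least `k` with `τ ∈ ∂^k𝒪`. -/
noncomputable def ind (O : Set (Term n)) (τ : Term n) : ℕ :=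
  sInf {k | τ ∈ borderClosure O k}

/-- Degree-`d` part of a set of terms. -/
def Od (O : Set (Term n)) (d : ℕ) : Set (Term n) := {τ | τ ∈ O ∧ tdeg τ = d}

variable {K : Type*} [Field K]

/-- The index of a nonzero polynomial: the maximal index of a term of its support. -/
noncomputable def indP (O : Set (Term n)) (f : MvPolynomial (Fin (n + 1)) K) : ℕ :=
  f.support.sup (ind O)

/-- A homogeneous `∂𝒪`-prebasis: a family `g σ = σ - Σ_{τ ∈ 𝒪_{deg σ}} c_{στ} τ`. -/
def IsPrebasis (O : Set (Term n)) (g : Term n → MvPolynomial (Fin (n + 1)) K) : Prop :=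
  ∀ σ ∈ border O, ∀ τ ∈ (monomial σ (1 : K) - g σ).support, τ ∈ O ∧ tdeg τ = tdeg σ

/-- The set of border reductors `𝒯G = {η·g_σ : σ ∈ ∂𝒪, η ∈ 𝒯_σ}`. -/
def reductors (O : Set (Term n)) (lab : Term n → ℕ)
    (g : Term n → MvPolynomial (Fin (n + 1)) K) : Set (MvPolynomial (Fin (n + 1)) K) :=
  {p | ∃ σ ∈ border O, ∃ η ∈ mulSet O lab σ, p = monomial η (1 : K) * g σ}

/-- The degree-`d` border reductors `𝒯G_d = 𝒯G ∩ P_d`. -/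
def reductorsDeg (O : Set (Term n)) (lab : Term n → ℕ)
    (g : Term n → MvPolynomial (Fin (n + 1)) K) (d : ℕ) :
    Set (MvPolynomial (Fin (n + 1)) K) :=
  reductors O lab g ∩ {p | p.IsHomogeneous d}

/-- One step of the border reduction relation `→_G`. -/
def Step (O : Set (Term n)) (lab : Term n → ℕ)
    (g : Term n → MvPolynomial (Fin (n + 1)) K)
    (f h : MvPolynomial (Fin (n + 1)) K) : Prop :=
  ∃ σ ∈ border O, ∃ η ∈ mulSet O lab σ, η + σ ∈ f.support ∧
    h = f - f.coeff (η + σ) • (monomial η (1 : K) * g σ)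

/-- The border reduction relation `→⁺_G` (finitely many, possibly zero, steps). -/
def Reduces (O : Set (Term n)) (lab : Term n → ℕ)
    (g : Term n → MvPolynomial (Fin (n + 1)) K) :
    MvPolynomial (Fin (n + 1)) K → MvPolynomial (Fin (n + 1)) K → Prop :=
  Relation.ReflTransGen (Step O lab g)

/-- The `K`-vector space spanned by a set of terms. -/
noncomputable def spanTerms (K : Type*) [Field K] (S : Set (Term n)) :
    Submodule K (MvPolynomial (Fin (n + 1)) K) :=
  Submodule.span K ((fun τ => monomial τ (1 : K)) '' S)

/-- The ideal `(G)` generated by a `∂𝒪`-prebasis. -/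
noncomputable def idealG (O : Set (Term n)) (g : Term n → MvPolynomial (Fin (n + 1)) K) :
    Ideal (MvPolynomial (Fin (n + 1)) K) :=
  Ideal.span (g '' border O)

/-- The degree-`d` part `I_d` of an ideal, as a `K`-vector subspace. -/
noncomputable def degPart (I : Ideal (MvPolynomial (Fin (n + 1)) K)) (d : ℕ) :
    Submodule K (MvPolynomial (Fin (n + 1)) K) :=
  Submodule.restrictScalars K I ⊓ homogeneousSubmodule (Fin (n + 1)) K d

/-- Homogeneous ideal. -/
def IsHomogeneousIdeal (I : Ideal (MvPolynomial (Fin (n + 1)) K)) : Prop :=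
  ∀ f ∈ I, ∀ d : ℕ, homogeneousComponent d f ∈ I

/-- `G` is a homogeneous `∂𝒪`-basis of `J`: it is a prebasis contained in `J` and for every
`d` one has `P_d = J_d ⊕ ⟨𝒪_d⟩`, i.e. the residue classes of `𝒪_d` are a basis of `P_d/J_d`. -/
def IsBorderBasisOf (O : Set (Term n)) (g : Term n → MvPolynomial (Fin (n + 1)) K)
    (J : Ideal (MvPolynomial (Fin (n + 1)) K)) : Prop :=
  IsPrebasis O g ∧ (∀ σ ∈ border O, g σ ∈ J) ∧
    ∀ d : ℕ, degPart J d ⊔ spanTerms K (Od O d) = homogeneousSubmodule (Fin (n + 1)) K d ∧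
      Disjoint (degPart J d) (spanTerms K (Od O d))

/-- An `m`-lower representation of `f` by `𝒯G`: `f = Σ c_j • η_j·g_{σ_j}` with distinct
pairs `(η_j, σ_j)`, `η_j ∈ 𝒯_{σ_j}` and `ind(η_j σ_j) ≤ m`. -/
def HasLRep (O : Set (Term n)) (lab : Term n → ℕ)
    (g : Term n → MvPolynomial (Fin (n + 1)) K)
    (f : MvPolynomial (Fin (n + 1)) K) (m : ℕ) : Prop :=
  ∃ (s : Finset (Term n × Term n)) (c : Term n × Term n → K),
    (∀ p ∈ s, p.2 ∈ border O ∧ p.1 ∈ mulSet O lab p.2 ∧ ind O (p.1 + p.2) ≤ m) ∧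
    f = ∑ p ∈ s, c p • (monomial p.1 (1 : K) * g p.2)

/-- An `m`-lower representation of `f` by `𝒯G_d`. -/
def HasLRepDeg (O : Set (Term n)) (lab : Term n → ℕ)
    (g : Term n → MvPolynomial (Fin (n + 1)) K)
    (f : MvPolynomial (Fin (n + 1)) K) (m d : ℕ) : Prop :=
  ∃ (s : Finset (Term n × Term n)) (c : Term n × Term n → K),
    (∀ p ∈ s, p.2 ∈ border O ∧ p.1 ∈ mulSet O lab p.2 ∧ ind O (p.1 + p.2) ≤ m ∧
      (monomial p.1 (1 : K) * g p.2).IsHomogeneous d) ∧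
    f = ∑ p ∈ s, c p • (monomial p.1 (1 : K) * g p.2)

/-- The subtype of terms of `𝒪` of degree `d`. -/
abbrev OdSub (O : Set (Term n)) (d : ℕ) : Type _ := {τ : Term n // τ ∈ Od O d}

lemma tdeg_component_lt {d : ℕ} (m : Term n) (h : tdeg m = d) (i : Fin (n + 1)) :
    m i < d + 1 := by
  have : m i ≤ tdeg m :=
    Finset.single_le_sum (f := fun j => m j) (fun j _ => Nat.zero_le _) (Finset.mem_univ i)
  omega

instance (O : Set (Term n)) (d : ℕ) : Finite (OdSub O d) := by
  have hinj : Function.Injective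
      (fun τ : OdSub O d => fun i : Fin (n + 1) =>
        (⟨τ.1 i, tdeg_component_lt τ.1 τ.2.2 i⟩ : Fin (d + 1))) := by
    intro a b hab
    apply Subtype.ext
    apply Finsupp.ext
    intro i
    simpa using congrArg Fin.val (congrFun hab i)
  exact Finite.of_injective _ hinj

noncomputable instance (O : Set (Term n)) (d : ℕ) : Fintype (OdSub O d) :=
  Fintype.ofFinite _

open scoped Classical in
/-- The `r`-th `d`-graded formal multiplication matrix of a prebasis `G`,
with rows indexed by `𝒪_{d+1}` and columns by `𝒪_d`. -/
noncomputable def multMatrix (O : Set (Term n))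
    (g : Term n → MvPolynomial (Fin (n + 1)) K) (r : Fin (n + 1)) (d : ℕ) :
    Matrix (OdSub O (d + 1)) (OdSub O d) K :=
  Matrix.of fun τ' τ =>
    if τ.1 + Finsupp.single r 1 ∈ O then
      (if τ.1 + Finsupp.single r 1 = τ'.1 then 1 else 0)
    else (monomial (τ.1 + Finsupp.single r 1) (1 : K)
            - g (τ.1 + Finsupp.single r 1)).coeff τ'.1

/-- The minimum degree of a border term. -/
noncomputable def minDegBorder (O : Set (Term n)) : ℕ := sInf (tdeg '' border O)

/-- The `d`-th Macaulay transformation `a^{⟨d⟩}`, computed greedily. -/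
noncomputable def macaulay : ℕ → ℕ → ℕ
  | 0, _ => 0
  | d + 1, a =>
    if a = 0 then 0
    else
      Nat.choose (sSup {k | Nat.choose k (d + 1) ≤ a} + 1) (d + 2) +
        macaulay d (a - Nat.choose (sSup {k | Nat.choose k (d + 1) ≤ a}) (d + 1))

/-- An ideal is generated in degrees `≤ m` if it is generated by its homogeneous
elements of degree `≤ m`. -/
def GeneratedInDegLE (I : Ideal (MvPolynomial (Fin (n + 1)) K)) (m : ℕ) : Prop :=
  I = Ideal.span {f | f ∈ I ∧ ∃ d ≤ m, f.IsHomogeneous d}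

/-!
Write `f = Σ c_(η,σ) • η·g_σ` over pairs with `η ∈ 𝒯_σ`. Every term of `η·g_σ` other than
`η·σ` is `η·τ` with `τ ∈ 𝒪` of the same degree, so it has index at most `deg η`, while `η·σ`
itself has index at least `deg η + 1`. The cones `C(σ)` are disjoint, so distinct pairs have
distinct products `η·σ`. Hence, among the pairs of a fixed degree, the one whose product `η·σ`
has maximal index contributes that term to `f` without cancellation. This term lies in the
support of `f`, so it bounds both `deg σ ≤ deg f` and `deg η + 1 ≤ ind_𝒪(f)` for every pair of
that degree; collecting the pairs by `σ` gives the cofactors `q_σ`.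
-/

section Terms

variable {O : Set (Term n)}

lemma tdeg_eq_degree (m : Term n) : tdeg m = m.degree :=
  (Finsupp.degree_eq_sum m).symm

lemma tdeg_add (a b : Term n) : tdeg (a + b) = tdeg a + tdeg b := by
  simp [tdeg_eq_degree]

lemma tdeg_single (r : Fin (n + 1)) (e : ℕ) : tdeg (Finsupp.single r e) = e := by
  simp [tdeg_eq_degree]

lemma IsOrderIdeal.zero_mem (hO : IsOrderIdeal O) : (0 : Term n) ∈ O := by
  obtain ⟨τ, hτ⟩ := hO.1
  exact hO.2 τ hτ 0 zero_le

lemma add_single_mem_borderClosure {t : Term n} {k : ℕ} (ht : t ∈ borderClosure O k)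
    (r : Fin (n + 1)) : t + Finsupp.single r 1 ∈ borderClosure O (k + 1) := by
  by_cases h : t + Finsupp.single r 1 ∈ borderClosure O k
  · exact Or.inl h
  · exact Or.inr ⟨h, r, t, ht, rfl⟩

lemma add_mem_borderClosure {t : Term n} {k : ℕ} (ht : t ∈ borderClosure O k) (η : Term n) :
    t + η ∈ borderClosure O (k + tdeg η) := by
  induction η using Finsupp.induction_linear generalizing t k with
  | zero => simpa [tdeg] using ht
  | add η η' ih ih' => simpa [tdeg_add, add_assoc] using ih' (ih ht)
  | single r e =>
    induction e with
    | zero => simpa [tdeg] using ht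
    | succ e ih =>
      simpa [Finsupp.single_add, tdeg_add, tdeg_single, add_assoc] using
        add_single_mem_borderClosure ih r

lemma mem_borderClosure_ind (hO : IsOrderIdeal O) (τ : Term n) :
    τ ∈ borderClosure O (ind O τ) :=
  Nat.sInf_mem (s := {k | τ ∈ borderClosure O k})
    ⟨tdeg τ, by simpa using add_mem_borderClosure (k := 0) hO.zero_mem τ⟩

lemma ind_add_le_of_mem {τ : Term n} (hτ : τ ∈ O) (η : Term n) : ind O (η + τ) ≤ tdeg η :=
  Nat.sInf_le (by simpa [add_comm] using add_mem_borderClosure (k := 0) hτ η)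

lemma exists_border_factor {k : ℕ} {τ : Term n} (h : τ ∈ borderClosure O k) (hτ : τ ∉ O) :
    ∃ η σ, σ ∈ border O ∧ τ = η + σ ∧ tdeg η < k := by
  induction k generalizing τ with
  | zero => exact absurd h hτ
  | succ k ih =>
    rcases h with h | ⟨-, r, t, ht, rfl⟩
    · obtain ⟨η, σ, hσ, rfl, hη⟩ := ih h hτ
      exact ⟨η, σ, hσ, rfl, by omega⟩
    · by_cases htO : t ∈ O
      · exact ⟨0, _, ⟨hτ, r, t, htO, rfl⟩, (zero_add _).symm, by simp [tdeg]⟩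
      · obtain ⟨η, σ, hσ, rfl, hη⟩ := ih ht htO
        refine ⟨η + Finsupp.single r 1, σ, hσ, add_right_comm _ _ _, ?_⟩
        rw [tdeg_add, tdeg_single]
        omega

lemma DegOrderedLabeling.lt_of_tdeg_lt {lab : Term n → ℕ} (hlab : DegOrderedLabeling O lab)
    {σ σ' : Term n} (hσ : σ ∈ border O) (hσ' : σ' ∈ border O) (h : tdeg σ < tdeg σ') :
    lab σ < lab σ' := by
  rcases lt_trichotomy (lab σ) (lab σ') with h' | h' | h'
  · exact h'
  · exact absurd (hlab.1 hσ hσ' h') (by rintro rfl; omega)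
  · exact absurd (hlab.2 σ' hσ' σ hσ h') (by omega)

variable (O) in
def reductorIndices (lab : Term n → ℕ) : Set (Term n × Term n) :=
  {p | p.2 ∈ border O ∧ p.1 ∈ mulSet O lab p.2}

variable {lab : Term n → ℕ}

/-- A border term dividing `η·σ` with `deg η ≥ ind(η·σ)` would have larger degree than `σ`,
hence a larger label, which `η ∈ 𝒯_σ` forbids. -/
lemma tdeg_fst_lt_ind (hO : IsOrderIdeal O) (hlab : DegOrderedLabeling O lab)
    {p : Term n × Term n} (hp : p ∈ reductorIndices O lab) : tdeg p.1 < ind O (p.1 + p.2) := by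
  obtain ⟨hσ, hη⟩ := hp
  by_contra! hle
  have hnotO : p.1 + p.2 ∉ O := fun h => hσ.1 (hO.2 _ h _ le_add_self)
  obtain ⟨η', σ', hσ', heq, hη'⟩ := exists_border_factor (mem_borderClosure_ind hO _) hnotO
  have hdeg := congrArg tdeg heq
  rw [tdeg_add, tdeg_add] at hdeg
  exact hη σ' hσ' (hlab.lt_of_tdeg_lt hσ hσ' (by omega)) (heq ▸ le_add_self)

lemma injOn_add_reductorIndices (hlab : DegOrderedLabeling O lab) :
    Set.InjOn (fun p : Term n × Term n => p.1 + p.2) (reductorIndices O lab) := by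
  rintro ⟨η, σ⟩ ⟨hσ, hη⟩ ⟨η', σ'⟩ ⟨hσ', hη'⟩ (heq : η + σ = η' + σ')
  have hσσ' : σ = σ' := by
    rcases lt_trichotomy (lab σ) (lab σ') with h | h | h
    · exact absurd (heq ▸ le_add_self) (hη σ' hσ' h)
    · exact hlab.1 hσ hσ' h
    · exact absurd (heq ▸ le_add_self) (hη' σ hσ h)
  subst hσσ'
  rw [add_right_cancel heq]

end Terms

section Reductors

variable {K : Type*} [Field K] {O : Set (Term n)} {lab : Term n → ℕ}
  {g : Term n → MvPolynomial (Fin (n + 1)) K}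

variable (g) in
noncomputable def reductor (p : Term n × Term n) : MvPolynomial (Fin (n + 1)) K :=
  monomial p.1 1 * g p.2

lemma reductors_eq_image : reductors O lab g = reductor g '' reductorIndices O lab := by
  ext f
  constructor
  · rintro ⟨σ, hσ, η, hη, rfl⟩
    exact ⟨(η, σ), ⟨hσ, hη⟩, rfl⟩
  · rintro ⟨⟨η, σ⟩, ⟨hσ, hη⟩, rfl⟩
    exact ⟨σ, hσ, η, hη, rfl⟩

lemma reductor_eq_sub (p : Term n × Term n) :
    reductor g p = monomial (p.1 + p.2) 1 - monomial p.1 1 * (monomial p.2 1 - g p.2) := by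
  rw [reductor, mul_sub, monomial_mul, one_mul, sub_sub_cancel]

lemma coeff_reductor_self (hg : IsPrebasis O g) {p : Term n × Term n} (hp : p.2 ∈ border O) :
    coeff (p.1 + p.2) (reductor g p) = 1 := by
  have hσ : coeff p.2 (monomial p.2 1 - g p.2) = 0 :=
    MvPolynomial.notMem_support_iff.mp fun h => hp.1 (hg _ hp _ h).1
  rw [reductor_eq_sub, coeff_sub, coeff_monomial, if_pos rfl, coeff_monomial_mul',
    if_pos le_self_add, add_tsub_cancel_left, hσ, mul_zero, sub_zero]

lemma coeff_reductor_eq_zero (hg : IsPrebasis O g) {p : Term n × Term n} (hp : p.2 ∈ border O)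
    {μ : Term n} (hne : p.1 + p.2 ≠ μ)
    (h : tdeg p.1 < ind O μ ∨ tdeg (p.1 + p.2) ≠ tdeg μ) :
    coeff μ (reductor g p) = 0 := by
  rw [reductor_eq_sub, coeff_sub, coeff_monomial, if_neg hne, coeff_monomial_mul', zero_sub,
    neg_eq_zero]
  split_ifs with hle
  · rw [one_mul]
    by_contra hc
    obtain ⟨hmem, hdeg⟩ := hg _ hp _ (MvPolynomial.mem_support_iff.mpr hc)
    obtain ⟨ν, rfl⟩ := exists_add_of_le hle
    rw [add_tsub_cancel_left] at hmem hdeg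
    rcases h with h | h
    · exact h.not_ge (add_comm p.1 ν ▸ ind_add_le_of_mem hmem p.1)
    · exact h (by rw [tdeg_add, tdeg_add, hdeg])
  · rfl

end Reductors

section Division

variable {K : Type*} [Field K] {O : Set (Term n)} {lab : Term n → ℕ}
  {g : Term n → MvPolynomial (Fin (n + 1)) K}

open Finsupp (linearCombination)

lemma coeff_linearCombination_reductor (c : Term n × Term n →₀ K) (μ : Term n) :
    coeff μ (linearCombination K (reductor g) c) =
      ∑ p ∈ c.support, c p * coeff μ (reductor g p) := by
  simp only [Finsupp.linearCombination_apply, Finsupp.sum, coeff_sum, coeff_smul, smul_eq_mul]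

lemma exists_mem_support_tdeg_eq_ind_le (hO : IsOrderIdeal O) (hlab : DegOrderedLabeling O lab)
    (hg : IsPrebasis O g) {c : Term n × Term n →₀ K} (hc : ↑c.support ⊆ reductorIndices O lab)
    {p : Term n × Term n} (hp : p ∈ c.support) :
    ∃ μ ∈ (linearCombination K (reductor g) c).support,
      tdeg μ = tdeg (p.1 + p.2) ∧ ind O (p.1 + p.2) ≤ ind O μ := by
  have hpT : p ∈ c.support.filter fun q => tdeg (q.1 + q.2) = tdeg (p.1 + p.2) :=
    Finset.mem_filter.mpr ⟨hp, rfl⟩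
  obtain ⟨m, hmT, hmax⟩ := Finset.exists_max_image _ (fun q => ind O (q.1 + q.2)) ⟨p, hpT⟩
  obtain ⟨hm, hmdeg⟩ := Finset.mem_filter.mp hmT
  have hcoeff : coeff (m.1 + m.2) (linearCombination K (reductor g) c) = c m := by
    rw [coeff_linearCombination_reductor, Finset.sum_eq_single_of_mem m hm,
      coeff_reductor_self hg (hc hm).1, mul_one]
    intro q hq hqm
    have hne : q.1 + q.2 ≠ m.1 + m.2 :=
      fun h => hqm (injOn_add_reductorIndices hlab (hc hq) (hc hm) h)
    rw [coeff_reductor_eq_zero hg (hc hq).1 hne ?_, mul_zero]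
    by_cases hqdeg : tdeg (q.1 + q.2) = tdeg (m.1 + m.2)
    · exact Or.inl ((tdeg_fst_lt_ind hO hlab (hc hq)).trans_le
        (hmax q (Finset.mem_filter.mpr ⟨hq, hqdeg.trans hmdeg⟩)))
    · exact Or.inr hqdeg
  exact ⟨m.1 + m.2, mem_support_iff.mpr (hcoeff ▸ Finsupp.mem_support_iff.mp hm), hmdeg,
    hmax p hpT⟩

noncomputable def cofactor (c : Term n × Term n →₀ K) (σ : Term n) :
    MvPolynomial (Fin (n + 1)) K :=
  ∑ p ∈ c.support with p.2 = σ, c p • monomial p.1 1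

lemma linearCombination_reductor_eq_sum_cofactor_mul (c : Term n × Term n →₀ K) :
    linearCombination K (reductor g) c = ∑ σ ∈ c.support.image Prod.snd, cofactor c σ * g σ := by
  rw [Finsupp.linearCombination_apply, Finsupp.sum, ← Finset.sum_fiberwise_of_maps_to
    (g := Prod.snd) (t := c.support.image Prod.snd) fun p hp => Finset.mem_image_of_mem _ hp]
  refine Finset.sum_congr rfl fun σ _ => ?_
  rw [cofactor, Finset.sum_mul]
  refine Finset.sum_congr rfl fun p hp => ?_
  obtain ⟨-, rfl⟩ := Finset.mem_filter.mp hp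
  rw [reductor, smul_mul_assoc]

lemma totalDegree_cofactor_le {c : Term n × Term n →₀ K} {m : ℕ}
    (h : ∀ p ∈ c.support, tdeg p.1 ≤ m) (σ : Term n) : (cofactor c σ).totalDegree ≤ m := by
  refine (totalDegree_finsetSum _ _).trans (Finset.sup_le fun p hp => ?_)
  calc (c p • monomial p.1 (1 : K)).totalDegree
      ≤ (monomial p.1 (1 : K)).totalDegree := totalDegree_smul_le _ _
    _ ≤ p.1.degree := totalDegree_monomial_le _ _
    _ ≤ m := tdeg_eq_degree p.1 ▸ h p (Finset.mem_filter.mp hp).1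

end Division

theorem border_division_general (O : Set (Term n)) (hO : IsOrderIdeal O)
    (lab : Term n → ℕ) (hlab : DegOrderedLabeling O lab)
    (g : Term n → MvPolynomial (Fin (n + 1)) K) (hg : IsPrebasis O g)
    (f : MvPolynomial (Fin (n + 1)) K)
    (hmem : f ∈ Submodule.span K (reductors O lab g)) :
    ∃ (s : Finset (Term n)) (q : Term n → MvPolynomial (Fin (n + 1)) K),
      (∀ σ ∈ s, σ ∈ border O ∧ tdeg σ ≤ f.totalDegree) ∧
      f = ∑ σ ∈ s, q σ * g σ ∧
      ∀ σ ∈ s, q σ ≠ 0 → (q σ).totalDegree ≤ indP O f - 1 := by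
  rw [reductors_eq_image, Finsupp.mem_span_image_iff_linearCombination] at hmem
  obtain ⟨c, hc, hf⟩ := hmem
  rw [Finsupp.mem_supported] at hc
  have hbound : ∀ p ∈ c.support, tdeg p.2 ≤ f.totalDegree ∧ tdeg p.1 ≤ indP O f - 1 := by
    intro p hp
    obtain ⟨μ, hμ, hdeg, hind⟩ := exists_mem_support_tdeg_eq_ind_le hO hlab hg hc hp
    rw [hf] at hμ
    have hμdeg : tdeg μ ≤ f.totalDegree := by rw [tdeg_eq_degree]; exact le_totalDegree hμ
    have hμind : ind O μ ≤ indP O f := Finset.le_sup hμ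
    have hpind := tdeg_fst_lt_ind hO hlab (hc hp)
    rw [tdeg_add] at hdeg
    omega
  refine ⟨c.support.image Prod.snd, cofactor c, fun σ hσ => ?_,
    hf ▸ linearCombination_reductor_eq_sum_cofactor_mul c,
    fun σ _ _ => totalDegree_cofactor_le (fun p hp => (hbound p hp).2) σ⟩
  obtain ⟨p, hp, rfl⟩ := Finset.mem_image.mp hσ
  exact ⟨(hc hp).1, (hbound p hp).1⟩

/-- **Border division.** A nonzero `f ∈ ⟨𝒯G⟩` can be written as `f = Σ q_j g_{σ_j}` with
border terms `σ_j` of degree `≤ deg f` and `deg q_j ≤ ind_𝒪(f) - 1` whenever `q_j ≠ 0`. -/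
theorem border_division (O : Set (Term n)) (hO : IsOrderIdeal O)
    (lab : Term n → ℕ) (hlab : DegOrderedLabeling O lab)
    (g : Term n → MvPolynomial (Fin (n + 1)) K) (hg : IsPrebasis O g)
    (f : MvPolynomial (Fin (n + 1)) K) (hf : f ≠ 0)
    (hmem : f ∈ Submodule.span K (reductors O lab g)) :
    ∃ (s : Finset (Term n)) (q : Term n → MvPolynomial (Fin (n + 1)) K),
      (∀ σ ∈ s, σ ∈ border O ∧ tdeg σ ≤ f.totalDegree) ∧
      f = ∑ σ ∈ s, q σ * g σ ∧
      ∀ σ ∈ s, q σ ≠ 0 → (q σ).totalDegree ≤ indP O f - 1 :=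
  border_division_general O hO lab hlab g hg f hmem

end Border
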